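/- arXiv:2205.11858 — 2 statements merged into one kernel-verified Lean document; each statement's English description precedes it below -/
import Mathlib

section
/- (Revenue formula underlying Proposition 2.) Let d : [0,1]×[0,1] → ℝ be continuous with d(x,y) > 0 whenever x ≠ y, let d^pass(a) = ∫₀^a ∫_a¹ d(x,y) dy dx + ∫_a¹ ∫₀^a d(x,y) dy dx, let h : [0,1] → ℝ be nonnegative (representing a ↦ φ(λ(a))), and suppose the function a ↦ h(a)/d^pass(a) is integrable on [0,1]. Define q(x,y) = |∫_x^y h(a)/d^pass(a) da| and the incentive-compatible price p*(x,y) = α·q(x,y) with α > 0. Then the total revenue satisfies ∫₀¹ ∫₀¹ d(x,y)·p*(x,y) dy dx = α·∫₀¹ h(a) da. In particular, the revenue under incentive-compatible pricing equals α times the total 'effective' mass ∫₀¹ φ(λ(a)) da of inspectors, and does not otherwise depend on the demand d. -/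
open MeasureTheory Set Function intervalIntegral
open scoped Interval

/-!
Put `g = h / d^pass`. As `d^pass > 0` on `(0, 1)`, `g ≥ 0` there, so the price of the trip
`x → y` is `α` times the integral of `g` over the set `Ι x y` of points the trip passes. By Fubini
the revenue is `α ∫₀¹ g(a) m(a) da`, where `m(a)` is the mass of trips `x → y` with `a ∈ Ι x y`;
splitting according to `x < a` or `a ≤ x` shows `m(a) = d^pass(a)`, so the integrand is `h(a)`.
To make the parametric integrals continuous, `d` is first replaced by a bounded continuous
extension of its restriction to the unit square.
-/

theorem integral_integral_integral_rotate {X Y Z E : Type*} [MeasurableSpace X]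
    [MeasurableSpace Y] [MeasurableSpace Z] [NormedAddCommGroup E] [NormedSpace ℝ E]
    {μ : Measure X} {ν : Measure Y} {ρ : Measure Z} [SFinite μ] [SFinite ν] [SFinite ρ]
    {F : X → Y → Z → E}
    (hF : Integrable (fun w : (X × Y) × Z => F w.1.1 w.1.2 w.2) ((μ.prod ν).prod ρ)) :
    ∫ x, ∫ y, ∫ z, F x y z ∂ρ ∂ν ∂μ = ∫ z, ∫ x, ∫ y, F x y z ∂ν ∂μ ∂ρ :=
  calc ∫ x, ∫ y, ∫ z, F x y z ∂ρ ∂ν ∂μ = ∫ p, ∫ z, F p.1 p.2 z ∂ρ ∂(μ.prod ν) :=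
        (integral_prod _ hF.integral_prod_left).symm
    _ = ∫ z, ∫ p, F p.1 p.2 z ∂(μ.prod ν) ∂ρ := integral_integral_swap hF
    _ = ∫ z, ∫ x, ∫ y, F x y z ∂ν ∂μ ∂ρ :=
        integral_congr_ae (hF.prod_left_ae.mono fun _ hz => integral_prod _ hz)

section IntervalIndicator

variable {E : Type*} [NormedAddCommGroup E] [NormedSpace ℝ E] {μ : Measure ℝ}
  [NullSingletonClass μ] {f : ℝ → E} {a b c : ℝ}

theorem integral_indicator_Iio_of_mem (h : b ∈ Icc a c) :
    ∫ x in a..c, (Iio b).indicator f x ∂μ = ∫ x in a..b, f x ∂μ := by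
  rw [← intervalIntegral.integral_indicator h]
  exact integral_congr_ae ((indicator_ae_eq_of_ae_eq_set Iio_ae_eq_Iic).mono fun _ hx _ => hx)

theorem integral_indicator_Ici_of_mem (h : b ∈ Icc a c) :
    ∫ x in a..c, (Ici b).indicator f x ∂μ = ∫ x in b..c, f x ∂μ := by
  rw [integral_congr_ae ((indicator_ae_eq_of_ae_eq_set Ioi_ae_eq_Ici.symm).mono fun _ hx _ => hx),
    integral_of_le (h.1.trans h.2), integral_of_le h.2,
    MeasureTheory.integral_indicator measurableSet_Ioi,
    Measure.restrict_restrict measurableSet_Ioi, inter_comm, Ioc_inter_Ioi, sup_eq_right.2 h.1]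

end IntervalIndicator

theorem mem_uIoc_iff_of_lt {α : Type*} [LinearOrder α] {x y a : α} (h : x < a) :
    a ∈ Ι x y ↔ a ≤ y := by
  rw [mem_uIoc]; grind

theorem mem_uIoc_iff_of_le {α : Type*} [LinearOrder α] {x y a : α} (h : a ≤ x) :
    a ∈ Ι x y ↔ y < a := by
  rw [mem_uIoc]; grind

theorem abs_intervalIntegral_eq_integral_indicator_uIoc {μ : Measure ℝ} {g : ℝ → ℝ}
    {b c x y : ℝ} (hx : x ∈ Icc b c) (hy : y ∈ Icc b c) (hg : ∀ᵐ a ∂μ, a ∈ Ioc b c → 0 ≤ g a) :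
    |∫ a in x..y, g a ∂μ| = ∫ a in b..c, (Ι x y).indicator g a ∂μ := by
  have hsub : Ι x y ⊆ Ioc b c := Ioc_subset_Ioc (le_inf hx.1 hy.1) (sup_le hx.2 hy.2)
  have hg' : 0 ≤ᵐ[μ.restrict (Ι x y)] g :=
    (ae_restrict_iff' measurableSet_uIoc).2 (hg.mono fun a ha hax => ha (hsub hax))
  rw [abs_integral_eq_abs_integral_uIoc, abs_of_nonneg (integral_nonneg_of_ae hg'),
    integral_of_le (hx.1.trans hx.2), MeasureTheory.integral_indicator measurableSet_uIoc,
    Measure.restrict_restrict measurableSet_uIoc, inter_eq_left.2 hsub]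

theorem exists_continuous_bounded_eqOn_Icc_prod {f : ℝ → ℝ → ℝ} {a b c d : ℝ} (hab : a ≤ b)
    (hcd : c ≤ d) (hf : ContinuousOn (uncurry f) (Icc a b ×ˢ Icc c d)) :
    ∃ F : ℝ → ℝ → ℝ, Continuous (uncurry F) ∧ (∃ C, ∀ x y, ‖F x y‖ ≤ C) ∧
      ∀ x ∈ Icc a b, ∀ y ∈ Icc c d, F x y = f x y := by
  obtain ⟨C, hC⟩ := (isCompact_Icc.prod isCompact_Icc).exists_bound_of_continuousOn hf
  have hproj : Continuous fun z : ℝ × ℝ =>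
      ((projIcc a b hab z.1 : ℝ), (projIcc c d hcd z.2 : ℝ)) := by
    fun_prop
  refine ⟨fun x y => f (projIcc a b hab x) (projIcc c d hcd y),
    hf.comp_continuous hproj fun z => ⟨Subtype.prop _, Subtype.prop _⟩,
    ⟨C, fun x y => hC (projIcc a b hab x, projIcc c d hcd y) ⟨Subtype.prop _, Subtype.prop _⟩⟩,
    fun x hx y hy => ?_⟩
  simp [projIcc_of_mem hab hx, projIcc_of_mem hcd hy]

noncomputable def passMass (f : ℝ → ℝ → ℝ) (a : ℝ) : ℝ :=
  (∫ x in (0:ℝ)..a, ∫ y in a..(1:ℝ), f x y) + ∫ x in a..(1:ℝ), ∫ y in (0:ℝ)..a, f x y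

section PassMass

variable {f : ℝ → ℝ → ℝ} {a : ℝ}

theorem passMass_congr {f' : ℝ → ℝ → ℝ}
    (h : ∀ x ∈ Icc (0:ℝ) 1, ∀ y ∈ Icc (0:ℝ) 1, f x y = f' x y) (ha : a ∈ Icc (0:ℝ) 1) :
    passMass f a = passMass f' a := by
  have h0 : (0:ℝ) ∈ Icc (0:ℝ) 1 := left_mem_Icc.2 zero_le_one
  have h1 : (1:ℝ) ∈ Icc (0:ℝ) 1 := right_mem_Icc.2 zero_le_one
  unfold passMass
  congr 1 <;> refine integral_congr fun x hx => integral_congr fun y hy => h x ?_ y ?_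
  exacts [uIcc_subset_Icc h0 ha hx, uIcc_subset_Icc ha h1 hy,
    uIcc_subset_Icc ha h1 hx, uIcc_subset_Icc h0 ha hy]

theorem integral_integral_pos_of_pos (hf : Continuous (uncurry f)) {b c d e : ℝ}
    (hbc : b < c) (hde : d < e) (hpos : ∀ x ∈ Ioo b c, ∀ y ∈ Ioo d e, 0 < f x y) :
    0 < ∫ x in b..c, ∫ y in d..e, f x y :=
  intervalIntegral_pos_of_pos_on
    ((continuous_parametric_intervalIntegral_of_continuous' hf d e).intervalIntegrable b c)
    (fun x hx => intervalIntegral_pos_of_pos_on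
      ((hf.uncurry_left x).intervalIntegrable d e) (hpos x hx) hde) hbc

theorem passMass_pos (hf : Continuous (uncurry f))
    (hpos : ∀ x ∈ Icc (0:ℝ) 1, ∀ y ∈ Icc (0:ℝ) 1, x ≠ y → 0 < f x y) (ha : a ∈ Ioo (0:ℝ) 1) :
    0 < passMass f a :=
  add_pos
    (integral_integral_pos_of_pos hf ha.1 ha.2 fun x hx y hy =>
      hpos x ⟨hx.1.le, (hx.2.trans ha.2).le⟩ y ⟨(ha.1.trans hy.1).le, hy.2.le⟩
        (hx.2.trans hy.1).ne)
    (integral_integral_pos_of_pos hf ha.2 ha.1 fun x hx y hy =>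
      hpos x ⟨(ha.1.trans hx.1).le, hx.2.le⟩ y ⟨hy.1.le, (hy.2.trans ha.2).le⟩
        (hy.2.trans hx.1).ne')

theorem integral_mul_indicator_uIoc {g : ℝ → ℝ} (ha : a ∈ Icc (0:ℝ) 1) (x : ℝ) :
    ∫ y in (0:ℝ)..1, f x y * (Ι x y).indicator g a =
      ((Iio a).indicator (fun x => ∫ y in a..(1:ℝ), f x y) x +
        (Ici a).indicator (fun x => ∫ y in (0:ℝ)..a, f x y) x) * g a := by
  rcases lt_or_ge x a with hx | hx
  · have hy : ∀ y,
        f x y * (Ι x y).indicator g a = (Ici a).indicator (fun y => f x y * g a) y := by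
      intro y
      by_cases hy : a ≤ y <;> simp [mem_uIoc_iff_of_lt hx, hy]
    simp [hy, integral_indicator_Ici_of_mem ha, indicator_of_mem (mem_Iio.2 hx),
      indicator_of_notMem (notMem_Ici.2 hx)]
  · have hy : ∀ y,
        f x y * (Ι x y).indicator g a = (Iio a).indicator (fun y => f x y * g a) y := by
      intro y
      by_cases hy : y < a <;> simp [mem_uIoc_iff_of_le hx, hy]
    simp [hy, integral_indicator_Iio_of_mem ha, indicator_of_mem (mem_Ici.2 hx),
      indicator_of_notMem (notMem_Iio.2 hx)]

theorem integral_integral_mul_indicator_uIoc_eq_passMass (hf : Continuous (uncurry f)) {g : ℝ → ℝ}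
    (ha : a ∈ Icc (0:ℝ) 1) :
    ∫ x in (0:ℝ)..1, ∫ y in (0:ℝ)..1, f x y * (Ι x y).indicator g a = passMass f a * g a := by
  have hindicator : ∀ s : Set ℝ, MeasurableSet s → ∀ b c : ℝ,
      IntervalIntegrable (s.indicator fun x => ∫ y in b..c, f x y) volume 0 1 :=
    fun s hs b c => intervalIntegrable_iff.2 <|
      ((continuous_parametric_intervalIntegral_of_continuous' hf b c).intervalIntegrable
        0 1).def'.indicator hs
  simp_rw [integral_mul_indicator_uIoc ha]
  rw [intervalIntegral.integral_mul_const,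
    integral_add (hindicator _ measurableSet_Iio _ _) (hindicator _ measurableSet_Ici _ _),
    integral_indicator_Iio_of_mem ha, integral_indicator_Ici_of_mem ha, passMass]

end PassMass

theorem integrable_mul_indicator_uIoc {μ : Measure ℝ} [IsFiniteMeasure μ] {f : ℝ → ℝ → ℝ}
    {g : ℝ → ℝ} {C : ℝ} (hf : Measurable (uncurry f)) (hfC : ∀ x y, ‖f x y‖ ≤ C)
    (hg : Integrable g μ) :
    Integrable (fun w : (ℝ × ℝ) × ℝ => f w.1.1 w.1.2 * (Ι w.1.1 w.1.2).indicator g w.2)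
      ((μ.prod μ).prod μ) := by
  have hS : MeasurableSet {w : (ℝ × ℝ) × ℝ | w.2 ∈ Ι w.1.1 w.1.2} :=
    (measurableSet_lt (measurable_fst.fst.min measurable_fst.snd) measurable_snd).inter
      (measurableSet_le measurable_snd (measurable_fst.fst.max measurable_fst.snd))
  exact ((hg.comp_snd (μ.prod μ)).indicator hS).bdd_mul (c := C)
    (hf.comp measurable_fst).aestronglyMeasurable (ae_of_all _ fun w => hfC _ _)

theorem revenue_formula_general
    (d : ℝ → ℝ → ℝ)
    (hd : ContinuousOn (fun p : ℝ × ℝ => d p.1 p.2) (Set.Icc 0 1 ×ˢ Set.Icc 0 1))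
    (hd_pos : ∀ x ∈ Set.Icc (0:ℝ) 1, ∀ y ∈ Set.Icc (0:ℝ) 1, x ≠ y → 0 < d x y)
    (dpass : ℝ → ℝ)
    (hdpass : ∀ a, dpass a =
      (∫ x in (0:ℝ)..a, ∫ y in a..(1:ℝ), d x y)
        + ∫ x in a..(1:ℝ), ∫ y in (0:ℝ)..a, d x y)
    (h : ℝ → ℝ) (hh_nonneg : ∀ a ∈ Set.Icc (0:ℝ) 1, 0 ≤ h a)
    (hint : IntegrableOn (fun a => h a / dpass a) (Set.Icc 0 1))
    (q : ℝ → ℝ → ℝ)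
    (hq : ∀ x y, q x y = |∫ a in x..y, h a / dpass a|)
    (α : ℝ)
    (p : ℝ → ℝ → ℝ) (hp : ∀ x y, p x y = α * q x y) :
    (∫ x in (0:ℝ)..1, ∫ y in (0:ℝ)..1, d x y * p x y)
      = α * ∫ a in (0:ℝ)..1, h a := by
  obtain ⟨D, hD, ⟨C, hDC⟩, hDd⟩ :=
    exists_continuous_bounded_eqOn_Icc_prod zero_le_one zero_le_one hd
  set g : ℝ → ℝ := fun a => h a / dpass a
  have hdpassD : ∀ a ∈ Icc (0:ℝ) 1, dpass a = passMass D a := fun a ha =>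
    (hdpass a).trans (passMass_congr (fun x hx y hy => (hDd x hx y hy).symm) ha)
  have hdpass_pos : ∀ a ∈ Ioo (0:ℝ) 1, 0 < dpass a := fun a ha =>
    hdpassD a (Ioo_subset_Icc_self ha) ▸ passMass_pos hD
      (fun x hx y hy hxy => hDd x hx y hy ▸ hd_pos x hx y hy hxy) ha
  have hae : ∀ᵐ a, a ∈ Ioc (0:ℝ) 1 → a ∈ Ioo (0:ℝ) 1 :=
    (Measure.ae_ne volume 1).mono fun a ha1 ha => ⟨ha.1, ha.2.lt_of_ne ha1⟩
  have hprice : ∀ x ∈ Icc (0:ℝ) 1, ∀ y ∈ Icc (0:ℝ) 1,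
      d x y * p x y = α * ∫ a in (0:ℝ)..1, D x y * (Ι x y).indicator g a := by
    intro x hx y hy
    rw [hp, hq, abs_intervalIntegral_eq_integral_indicator_uIoc hx hy (hae.mono fun a ha ha' =>
      div_nonneg (hh_nonneg a (Ioc_subset_Icc_self ha')) (hdpass_pos a (ha ha')).le),
      intervalIntegral.integral_const_mul, hDd x hx y hy]
    ring
  calc ∫ x in (0:ℝ)..1, ∫ y in (0:ℝ)..1, d x y * p x y
      = α * ∫ x in (0:ℝ)..1, ∫ y in (0:ℝ)..1, ∫ a in (0:ℝ)..1,
          D x y * (Ι x y).indicator g a := by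
        rw [← intervalIntegral.integral_const_mul]
        refine integral_congr fun x hx => ?_
        rw [← intervalIntegral.integral_const_mul]
        exact integral_congr fun y hy => hprice x (by simpa using hx) y (by simpa using hy)
    _ = α * ∫ a in (0:ℝ)..1, ∫ x in (0:ℝ)..1, ∫ y in (0:ℝ)..1,
          D x y * (Ι x y).indicator g a := by
        simp only [integral_of_le zero_le_one]
        rw [integral_integral_integral_rotate (integrable_mul_indicator_uIoc hD.measurable hDC
          (hint.mono_set Ioc_subset_Icc_self))]
    _ = α * ∫ a in (0:ℝ)..1, h a := by
        congr 1
        refine integral_congr_ae (hae.mono fun a ha ha' => ?_)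
        rw [uIoc_of_le zero_le_one] at ha'
        rw [integral_integral_mul_indicator_uIoc_eq_passMass hD (Ioo_subset_Icc_self (ha ha')),
          ← hdpassD a (Ioc_subset_Icc_self ha')]
        exact mul_div_cancel₀ _ (hdpass_pos a (ha ha')).ne'

/-- Revenue formula underlying Proposition 2: under the incentive-compatible
pricing scheme `p*(x,y) = α·|∫_x^y h(a)/d^pass(a) da|`, the total revenue
equals `α` times the total effective mass `∫₀¹ h(a) da` of inspectors, and
does not otherwise depend on the demand `d`. -/
theorem revenue_formula
    (d : ℝ → ℝ → ℝ)
    (hd : ContinuousOn (fun p : ℝ × ℝ => d p.1 p.2) (Set.Icc 0 1 ×ˢ Set.Icc 0 1))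
    (hd_pos : ∀ x ∈ Set.Icc (0:ℝ) 1, ∀ y ∈ Set.Icc (0:ℝ) 1, x ≠ y → 0 < d x y)
    (dpass : ℝ → ℝ)
    (hdpass : ∀ a, dpass a =
      (∫ x in (0:ℝ)..a, ∫ y in a..(1:ℝ), d x y)
        + ∫ x in a..(1:ℝ), ∫ y in (0:ℝ)..a, d x y)
    (h : ℝ → ℝ) (hh_nonneg : ∀ a ∈ Set.Icc (0:ℝ) 1, 0 ≤ h a)
    (hint : IntegrableOn (fun a => h a / dpass a) (Set.Icc 0 1))
    (q : ℝ → ℝ → ℝ)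
    (hq : ∀ x y, q x y = |∫ a in x..y, h a / dpass a|)
    (α : ℝ) (hα : 0 < α)
    (p : ℝ → ℝ → ℝ) (hp : ∀ x y, p x y = α * q x y) :
    (∫ x in (0:ℝ)..1, ∫ y in (0:ℝ)..1, d x y * p x y)
      = α * ∫ a in (0:ℝ)..1, h a :=
  revenue_formula_general d hd hd_pos dpass hdpass h hh_nonneg hint q hq α p hp
end

section
/- (Full surplus extraction on the line.) Let g : ℝ → ℝ be nonnegative and integrable on [0,1], define q(x,y) = ∫_x^y g(a) da for 0 ≤ x ≤ y ≤ 1, let α > 0, and set p*(x,y) = α·q(x,y). For a passenger with trip utility u travelling from x to y, the payoff from buying the full ticket, u − p*(x,y), equals the payoff u − α·q(x,y) from travelling with no ticket, which is the passenger's reservation payoff; moreover, for any strategy given by points x = c₀ ≤ c₁ ≤ ⋯ ≤ c_m = y and ticketed set T ⊆ {1,…,m}, the payoff u − Σ_{i∈T} p*(c_{i-1},c_i) − α·Σ_{i∉T} q(c_{i-1},c_i) also equals u − α·q(x,y). Hence every passenger's equilibrium payoff under p* is exactly the reservation payoff u − α·q(x,y), i.e., p* extracts the full surplus. -/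
open MeasureTheory Finset

/-- Full surplus extraction on the line: under the pricing scheme
`p*(x,y) = α·q(x,y)`, the payoff from buying the full ticket equals the
reservation payoff `u − α·q(x,y)` from travelling without any ticket, and
every strategy (a partition `x = c₀ ≤ ⋯ ≤ c_m = y` with ticketed set `T`)
yields the same payoff `u − α·q(x,y)`; hence `p*` extracts the full surplus. -/
theorem full_surplus_extraction
    (g : ℝ → ℝ) (hg_nonneg : ∀ a, 0 ≤ g a)
    (hg_int : IntegrableOn g (Set.Icc 0 1))
    (q : ℝ → ℝ → ℝ)
    (hq : ∀ x y, 0 ≤ x → x ≤ y → y ≤ 1 → q x y = ∫ a in x..y, g a)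
    (α : ℝ) (hα : 0 < α)
    (p : ℝ → ℝ → ℝ) (hp : ∀ a b, p a b = α * q a b)
    (x y : ℝ) (hx : 0 ≤ x) (hxy : x ≤ y) (hy : y ≤ 1) (u : ℝ) :
    u - p x y = u - α * q x y ∧
    (∀ (m : ℕ), 0 < m → ∀ (c : ℕ → ℝ), c 0 = x → c m = y →
      (∀ i, i < m → c i ≤ c (i + 1)) →
      ∀ (T : Finset ℕ), T ⊆ Finset.Icc 1 m →
        u - ((∑ i ∈ T, p (c (i - 1)) (c i))
            + α * (∑ i ∈ Finset.Icc 1 m \ T, q (c (i - 1)) (c i)))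
          = u - α * q x y) := by
  refine ⟨by rw [hp], ?_⟩
  intro m hm c hc0 hcm hmono T hT
  -- monotonicity of c up to m
  have hstep : ∀ i j, i ≤ j → j ≤ m → c i ≤ c j := by
    intro i j hij hjm
    induction j with
    | zero => simp_all
    | succ k ih =>
      rcases Nat.eq_or_lt_of_le hij with h | h
      · exact le_of_eq (by rw [h])
      · exact le_trans (ih (Nat.lt_succ_iff.mp h) (le_trans (Nat.le_succ k) hjm))
          (hmono k (Nat.lt_of_succ_le hjm))
  have hlb : ∀ i, i ≤ m → 0 ≤ c i := by
    intro i hi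
    have := hstep 0 i (Nat.zero_le i) hi
    rw [hc0] at this; linarith
  have hub : ∀ i, i ≤ m → c i ≤ 1 := fun i hi => le_trans (hcm ▸ hstep i m hi le_rfl) hy
  -- rewrite each q term as an interval integral
  have hqterm : ∀ j, j < m → q (c j) (c (j + 1)) = ∫ a in (c j)..(c (j + 1)), g a := by
    intro j hj
    exact hq _ _ (hlb j hj.le) (hmono j hj) (hub (j + 1) hj)
  have hint : ∀ j, j < m → IntervalIntegrable g MeasureTheory.volume (c j) (c (j + 1)) := by
    intro j hj
    rw [intervalIntegrable_iff_integrableOn_Icc_of_le (hmono j hj)]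
    exact hg_int.mono_set (Set.Icc_subset_Icc (hlb j hj.le) (hub (j + 1) hj))
  -- telescoping sum
  have htel : ∑ j ∈ Finset.range m, q (c j) (c (j + 1)) = q x y := by
    have := intervalIntegral.sum_integral_adjacent_intervals (f := g)
      (μ := MeasureTheory.volume) (a := c) (n := m) hint
    calc ∑ j ∈ Finset.range m, q (c j) (c (j + 1))
        = ∑ j ∈ Finset.range m, ∫ a in (c j)..(c (j + 1)), g a :=
          Finset.sum_congr rfl fun j hj => hqterm j (Finset.mem_range.mp hj)
      _ = ∫ a in (c 0)..(c m), g a := this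
      _ = q x y := by rw [hc0, hcm, hq x y hx hxy hy]
  -- reindex Icc 1 m to range m
  have hre : ∑ i ∈ Finset.Icc 1 m, q (c (i - 1)) (c i)
      = ∑ j ∈ Finset.range m, q (c j) (c (j + 1)) := by
    rw [← Finset.Ico_add_one_right_eq_Icc, Finset.sum_Ico_eq_sum_range]
    simp [Nat.add_sub_cancel, add_comm 1]
  -- combine sums
  have hsplit : (∑ i ∈ T, p (c (i - 1)) (c i))
      + α * (∑ i ∈ Finset.Icc 1 m \ T, q (c (i - 1)) (c i))
      = α * ∑ i ∈ Finset.Icc 1 m, q (c (i - 1)) (c i) := by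
    have : ∑ i ∈ T, p (c (i - 1)) (c i) = α * ∑ i ∈ T, q (c (i - 1)) (c i) := by
      rw [Finset.mul_sum]; exact Finset.sum_congr rfl fun i _ => hp _ _
    rw [this, ← mul_add, ← Finset.sum_sdiff hT, add_comm]
  rw [hsplit, hre, htel]
end
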